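/- arXiv:2307.06700 — 6 statements merged into one kernel-verified Lean document; each statement's English description precedes it below -/
import Mathlib

section
/- For every digraph D, the dichromatic number satisfies χ⃗(D) ≤ δ*_c(D) + 1, where δ*_c(D) is the cycle-degeneracy of D. -/
variable {V : Type*}

/-- A directed cycle in the digraph with arc relation `A`: a nonempty list of
pairwise distinct vertices forming a closed directed walk. -/
def IsDicycle (A : V → V → Prop) (l : List V) : Prop :=
  l ≠ [] ∧ l.Nodup ∧ l.Chain' A ∧ ∀ x ∈ l.getLast?, ∀ y ∈ l.head?, A x y

/-- The digraph with arc relation `A` has no directed cycle. -/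
def Acyclic (A : V → V → Prop) : Prop := ¬ ∃ l : List V, IsDicycle A l

/-- `S` intersects every directed cycle of `A` containing `v`. -/
def HitsCyclesThrough (A : V → V → Prop) (v : V) (S : Finset V) : Prop :=
  ∀ l : List V, IsDicycle A l → v ∈ l → ∃ u ∈ l, u ∈ S

/-- The cycle-degree of `v`: the minimum size of a set `S ⊆ V \ {v}`
intersecting every directed cycle containing `v`. -/
noncomputable def cycleDegree (A : V → V → Prop) (v : V) : ℕ :=
  sInf { n | ∃ S : Finset V, S.card = n ∧ v ∉ S ∧ HitsCyclesThrough A v S }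

/-- `(U, E)` is a (nonempty) subdigraph of the digraph on `V` with arcs `A`. -/
def IsSubdigraph (A : V → V → Prop) (U : Finset V) (E : Finset (V × V)) : Prop :=
  U.Nonempty ∧ ∀ p ∈ E, A p.1 p.2 ∧ p.1 ∈ U ∧ p.2 ∈ U

/-- The arc relation of a finite arc set. -/
def arcRel (E : Finset (V × V)) : V → V → Prop := fun x y => (x, y) ∈ E

/-- The cycle-degeneracy of the digraph `A`: the maximum, over all subdigraphs,
of the minimum cycle-degree. -/
noncomputable def cycleDegeneracy (A : V → V → Prop) : ℕ :=
  sSup { m | ∃ (U : Finset V) (E : Finset (V × V)),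
    IsSubdigraph A U E ∧ ∀ v ∈ U, m ≤ cycleDegree (arcRel E) v }

/-- A dicolouring: every colour class induces an acyclic subdigraph. -/
def IsDicolouring {C : Type*} (A : V → V → Prop) (φ : V → C) : Prop :=
  ∀ c : C, Acyclic fun x y => A x y ∧ φ x = c ∧ φ y = c

/-- The dichromatic number: least `k` admitting a `k`-dicolouring. -/
noncomputable def dichromaticNumber (A : V → V → Prop) : ℕ :=
  sInf { k | ∃ φ : V → Fin k, IsDicolouring A φ }


/-! Greedy colouring along a degeneracy order. A digraph `H` of cycle-degeneracy `δ` has a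
vertex `v` whose cycles are all hit by a set `S ∌ v` of at most `δ` vertices. Colour `H - v`
inductively with `δ + 1` colours and give `v` a colour missing on `S`: a monochromatic cycle
through `v` would contain a vertex of `S`, which has a different colour, and a cycle avoiding
`v` is a cycle of `H - v`. -/

theorem List.IsChain.exists_mem_rel_of_mem {R : V → V → Prop} {x : V} :
    ∀ {l : List V}, l.IsChain R → x ∈ l → x ∉ l.getLast? → ∃ y ∈ l, R x y
  | [], _, hx, _ => absurd hx List.not_mem_nil
  | [a], _, hx, hlast => by simp_all
  | a :: b :: t, h, hx, hlast => by
      rw [List.isChain_cons_cons] at h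
      rw [List.getLast?_cons_cons] at hlast
      rcases List.mem_cons.1 hx with rfl | hx
      · exact ⟨b, by simp, h.1⟩
      · obtain ⟨y, hy, hxy⟩ := h.2.exists_mem_rel_of_mem hx hlast
        exact ⟨y, List.mem_cons_of_mem _ hy, hxy⟩

namespace IsDicycle

variable {R S : V → V → Prop} {l : List V}

theorem singleton {v : V} (h : R v v) : IsDicycle R [v] :=
  ⟨List.cons_ne_nil _ _, List.nodup_singleton v, List.isChain_singleton v,
    by simpa using h⟩

theorem mono_of_mem (h : IsDicycle R l) (hRS : ∀ x ∈ l, ∀ y ∈ l, R x y → S x y) :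
    IsDicycle S l := by
  obtain ⟨hne, hnd, hch, hwrap⟩ := h
  exact ⟨hne, hnd, hch.imp_of_mem_imp fun x y hx hy => hRS x hx y hy, fun x hx y hy =>
    hRS x (List.mem_of_mem_getLast? hx) y (List.mem_of_mem_head? hy) (hwrap x hx y hy)⟩

theorem exists_mem_rel (h : IsDicycle R l) {x : V} (hx : x ∈ l) : ∃ y ∈ l, R x y := by
  obtain ⟨hne, -, hch, hwrap⟩ := h
  by_cases hlast : x ∈ l.getLast?
  · obtain ⟨a, t, rfl⟩ := List.exists_cons_of_ne_nil hne
    exact ⟨a, List.mem_cons_self, hwrap x hlast a rfl⟩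
  · exact hch.exists_mem_rel_of_mem hx hlast

theorem forall_mem {P : V → Prop} (h : IsDicycle R l) (hP : ∀ x y, R x y → P x) :
    ∀ x ∈ l, P x := fun x hx =>
  let ⟨y, _, hxy⟩ := h.exists_mem_rel hx
  hP x y hxy

theorem exists_mem_ne {v : V} (h : IsDicycle R l) (hv : ¬ R v v) : ∃ u ∈ l, u ≠ v := by
  obtain ⟨hne, hnd, -, hwrap⟩ := h
  obtain ⟨a, t, rfl⟩ := List.exists_cons_of_ne_nil hne
  by_cases hav : a = v
  · subst hav
    cases t with
    | nil => exact absurd (hwrap a rfl a rfl) hv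
    | cons b t =>
      exact ⟨b, by simp, fun hba => (List.nodup_cons.1 hnd).1 (by simp [hba])⟩
  · exact ⟨a, List.mem_cons_self, hav⟩

end IsDicycle

theorem IsDicolouring.not_rel_self {C : Type*} {A : V → V → Prop} {φ : V → C}
    (h : IsDicolouring A φ) (v : V) : ¬ A v v := fun hv =>
  h (φ v) ⟨[v], IsDicycle.singleton ⟨hv, rfl, rfl⟩⟩

section CycleDegree

variable [Fintype V] {R : V → V → Prop}

theorem cycleDegree_le_card (v : V) : cycleDegree R v ≤ Fintype.card V := by
  rcases Set.eq_empty_or_nonempty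
      {n | ∃ S : Finset V, S.card = n ∧ v ∉ S ∧ HitsCyclesThrough R v S}
    with h | ⟨n, hn⟩
  · simp [cycleDegree, h]
  · obtain ⟨S, rfl, -⟩ := id hn
    exact (Nat.sInf_le hn).trans S.card_le_univ

theorem exists_hitsCyclesThrough_card_eq_cycleDegree {v : V} (hv : ¬ R v v) :
    ∃ S : Finset V, S.card = cycleDegree R v ∧ v ∉ S ∧ HitsCyclesThrough R v S := by
  classical
  have hmem : (Finset.univ.erase v).card ∈
      {n | ∃ S : Finset V, S.card = n ∧ v ∉ S ∧ HitsCyclesThrough R v S} := by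
    refine ⟨_, rfl, Finset.notMem_erase v _, fun l hl _ => ?_⟩
    obtain ⟨u, hul, huv⟩ := hl.exists_mem_ne hv
    exact ⟨u, hul, Finset.mem_erase.2 ⟨huv, Finset.mem_univ u⟩⟩
  exact Nat.sInf_mem ⟨_, hmem⟩

end CycleDegree

def inducedRel (A : V → V → Prop) (U : Finset V) : V → V → Prop :=
  fun x y => A x y ∧ x ∈ U ∧ y ∈ U

section CycleDegeneracy

variable [Fintype V] {A : V → V → Prop}

theorem bddAbove_cycleDegeneracy_set :
    BddAbove {m | ∃ (U : Finset V) (E : Finset (V × V)),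
      IsSubdigraph A U E ∧ ∀ v ∈ U, m ≤ cycleDegree (arcRel E) v} := by
  refine ⟨Fintype.card V, ?_⟩
  rintro m ⟨U, E, ⟨⟨v, hv⟩, -⟩, hm⟩
  exact (hm v hv).trans (cycleDegree_le_card v)

theorem exists_cycleDegree_le_cycleDegeneracy {U : Finset V} {E : Finset (V × V)}
    (hUE : IsSubdigraph A U E) : ∃ v ∈ U, cycleDegree (arcRel E) v ≤ cycleDegeneracy A := by
  by_contra! h
  have : cycleDegeneracy A + 1 ≤ cycleDegeneracy A :=
    le_csSup bddAbove_cycleDegeneracy_set ⟨U, E, hUE, h⟩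
  omega

theorem exists_cycleDegree_inducedRel_le {U : Finset V} (hU : U.Nonempty) :
    ∃ v ∈ U, cycleDegree (inducedRel A U) v ≤ cycleDegeneracy A := by
  classical
  let E := (U ×ˢ U).filter fun p => A p.1 p.2
  have hE : arcRel E = inducedRel A U := by
    ext x y
    simp [E, arcRel, inducedRel, and_comm]
  rw [← hE]
  exact exists_cycleDegree_le_cycleDegeneracy ⟨hU, fun p hp => by simpa [E, and_comm] using hp⟩

end CycleDegeneracy

theorem IsDicolouring.update_inducedRel [DecidableEq V] {C : Type*} {A : V → V → Prop}
    {U S : Finset V} {v : V} {φ : V → C} {c : C}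
    (hφ : IsDicolouring (inducedRel A (U.erase v)) φ) (hvS : v ∉ S)
    (hS : HitsCyclesThrough (inducedRel A U) v S) (hc : ∀ u ∈ S, φ u ≠ c) :
    IsDicolouring (inducedRel A U) (Function.update φ v c) := by
  rintro c' ⟨l, hl⟩
  have hcol : ∀ x ∈ l, Function.update φ v c x = c' := hl.forall_mem fun _ _ h => h.2.1
  by_cases hvl : v ∈ l
  · obtain ⟨u, hul, huS⟩ := hS l (hl.mono_of_mem fun _ _ _ _ h => h.1) hvl
    have huv : u ≠ v := ne_of_mem_of_not_mem huS hvS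
    refine hc u huS ?_
    calc φ u = Function.update φ v c u := (Function.update_of_ne huv c φ).symm
      _ = Function.update φ v c v := (hcol u hul).trans (hcol v hvl).symm
      _ = c := Function.update_self v c φ
  · refine hφ c' ⟨l, hl.mono_of_mem fun x hx y hy h => ?_⟩
    have hxv : x ≠ v := ne_of_mem_of_not_mem hx hvl
    have hyv : y ≠ v := ne_of_mem_of_not_mem hy hvl
    obtain ⟨⟨hxy, hxU, hyU⟩, hxc, hyc⟩ := h
    rw [Function.update_of_ne hxv] at hxc
    rw [Function.update_of_ne hyv] at hyc
    exact ⟨⟨hxy, Finset.mem_erase.2 ⟨hxv, hxU⟩, Finset.mem_erase.2 ⟨hyv, hyU⟩⟩,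
      hxc, hyc⟩

theorem exists_dicolouring_inducedRel [Fintype V] {A : V → V → Prop} (hA : ∀ v, ¬ A v v)
    (U : Finset V) :
    ∃ φ : V → Fin (cycleDegeneracy A + 1), IsDicolouring (inducedRel A U) φ := by
  classical
  induction U using Finset.strongInduction with
  | H U ih =>
  rcases U.eq_empty_or_nonempty with rfl | hU
  · refine ⟨fun _ => 0, fun _ ⟨l, hl⟩ => ?_⟩
    obtain ⟨x, hx⟩ := List.exists_mem_of_ne_nil l hl.1
    exact Finset.notMem_empty x (hl.forall_mem (fun _ _ h => h.1.2.1) x hx)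
  · obtain ⟨v, hvU, hv⟩ := exists_cycleDegree_inducedRel_le (A := A) hU
    obtain ⟨S, hScard, hvS, hS⟩ := exists_hitsCyclesThrough_card_eq_cycleDegree
      (R := inducedRel A U) fun h => hA v h.1
    obtain ⟨φ, hφ⟩ := ih _ (U.erase_ssubset hvU)
    have hcard : (S.image φ).card < Fintype.card (Fin (cycleDegeneracy A + 1)) := by
      rw [Fintype.card_fin]
      exact Finset.card_image_le.trans_lt (by omega)
    obtain ⟨c, -, hc⟩ := Finset.exists_mem_notMem_of_card_lt_card hcard
    exact ⟨Function.update φ v c,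
      hφ.update_inducedRel hvS hS fun u hu h => hc (h ▸ Finset.mem_image_of_mem φ hu)⟩

theorem stmt1_general [Fintype V] (A : V → V → Prop) :
    dichromaticNumber A ≤ cycleDegeneracy A + 1 := by
  by_cases hA : ∀ v, ¬ A v v
  · obtain ⟨φ, hφ⟩ := exists_dicolouring_inducedRel hA Finset.univ
    have hU : inducedRel A Finset.univ = A := by
      ext x y
      simp [inducedRel]
    rw [hU] at hφ
    exact Nat.sInf_le ⟨φ, hφ⟩
  · -- a loop is a monochromatic dicycle, so the infimum is over `∅` and equals `0`
    obtain ⟨v, hv⟩ := not_forall_not.1 hA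
    have hno : {k | ∃ φ : V → Fin k, IsDicolouring A φ} = ∅ :=
      Set.eq_empty_of_forall_notMem fun _ ⟨_, hφ⟩ => hφ.not_rel_self v hv
    simp [dichromaticNumber, hno]

theorem stmt1 [Fintype V] [DecidableEq V] (A : V → V → Prop) :
    dichromaticNumber A ≤ cycleDegeneracy A + 1 :=
  stmt1_general A
end

section
/- For every digraph D, the directed treewidth of D is at least the cycle-degeneracy of D: dtw(D) ≥ δ*_c(D). -/
variable {V : Type*}

/-- `t''` is a descendant of `t'` w.r.t. the parent function `par`. -/
def Descend {n : ℕ} (par : Fin n → Fin n) (t'' t' : Fin n) : Prop :=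
  Relation.ReflTransGen (fun a b => par a = b) t'' t'

/-- `v` lies in some part `W t''` for `t''` in the subtree rooted at `t'`. -/
def BelowW {n : ℕ} (par : Fin n → Fin n) (W : Fin n → Finset V) (t' : Fin n)
    (v : V) : Prop :=
  ∃ t'', Descend par t'' t' ∧ v ∈ W t''

/-- A directed tree-decomposition of the digraph `A`: an out-arborescence given
by a root `r` and parent function `par` on `Fin n`, a partition `W` of the
vertices into nonempty parts, and guard sets `X` indexed by the (child endpoint
of the) arcs of the arborescence. -/
def IsDirTreeDecomp (A : V → V → Prop) {n : ℕ} (r : Fin n) (par : Fin n → Fin n)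
    (W X : Fin n → Finset V) : Prop :=
  par r = r ∧ (∀ t, Descend par t r) ∧
  (∀ t, (W t).Nonempty) ∧ (∀ v : V, ∃! t, v ∈ W t) ∧ X r = ∅ ∧
  ∀ t' : Fin n, t' ≠ r →
    (∀ v ∈ X t', ¬ BelowW par W t' v) ∧
    (∀ l : List V, l.Chain' A →
      (∀ x ∈ l.head?, BelowW par W t' x) →
      (∀ x ∈ l.getLast?, BelowW par W t' x) →
      (∃ x ∈ l.tail.dropLast, ¬ BelowW par W t' x) →
      ∃ x ∈ l, x ∈ X t')

/-- The bag `H_t = W_t ∪ ⋃_{e ∋ t} X_e` of a directed tree-decomposition. -/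
def dtdBag [DecidableEq V] {n : ℕ} (r : Fin n) (par : Fin n → Fin n)
    (W X : Fin n → Finset V) (t : Fin n) : Finset V :=
  W t ∪ X t ∪ (Finset.univ.filter fun t'' => par t'' = t ∧ t'' ≠ r).biUnion X

/-- The width of a directed tree-decomposition. -/
def dtdWidth [DecidableEq V] {n : ℕ} (r : Fin n) (par : Fin n → Fin n)
    (W X : Fin n → Finset V) : ℕ :=
  (Finset.univ.sup fun t => (dtdBag r par W X t).card) - 1

/-- The directed treewidth of the digraph `A`. -/
noncomputable def dirTreewidth [DecidableEq V] (A : V → V → Prop) : ℕ :=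
  sInf { w | ∃ (n : ℕ) (r : Fin n) (par : Fin n → Fin n) (W X : Fin n → Finset V),
    IsDirTreeDecomp A r par W X ∧ dtdWidth r par W X = w }

/-
Given a subdigraph `(U, E)` and a directed tree-decomposition, take a node `t` as deep as
possible in the arborescence among those whose part meets `U`, and a vertex `v ∈ U ∩ W t`.
Every vertex of `U` below `t` then lies in `W t`. A directed cycle of `E` through `v` either
stays below `t`, and then meets `W t` in a vertex other than `v`, or leaves the subtree of `t`,
and then the closed walk around it starting and ending at `v` must meet the guard `X t`.
So the bag of `t` minus `v` meets every cycle through `v`, and the cycle-degree of `v` is at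
most the width.
-/

section Arborescence

variable {n : ℕ} {par : Fin n → Fin n} {r : Fin n}

lemma Descend.exists_iterate_eq {a b : Fin n} (h : Descend par a b) : ∃ k, par^[k] a = b := by
  induction h with
  | refl => exact ⟨0, rfl⟩
  | tail _ step ih =>
    obtain ⟨k, hk⟩ := ih
    exact ⟨k + 1, by rw [Function.iterate_succ_apply', hk, step]⟩

noncomputable def rootDist (par : Fin n → Fin n) (r t : Fin n) : ℕ :=
  sInf {k | par^[k] t = r}

lemma iterate_rootDist {t : Fin n} (ht : Descend par t r) : par^[rootDist par r t] t = r :=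
  Nat.sInf_mem ht.exists_iterate_eq

lemma iterate_eq_root_of_rootDist_le (hr : par r = r) {t : Fin n} (ht : Descend par t r)
    {j : ℕ} (hj : rootDist par r t ≤ j) : par^[j] t = r := by
  obtain ⟨k, rfl⟩ := Nat.exists_eq_add_of_le hj
  rw [add_comm, Function.iterate_add_apply, iterate_rootDist ht, Function.iterate_fixed hr]

lemma rootDist_lt_of_descend (hr : par r = r) (hall : ∀ t, Descend par t r) {a b : Fin n}
    (h : Descend par a b) (hab : a ≠ b) : rootDist par r b < rootDist par r a := by
  obtain ⟨k, rfl⟩ := h.exists_iterate_eq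
  have hk : k ≠ 0 := by rintro rfl; exact hab rfl
  have ha : rootDist par r a ≠ 0 := by
    intro h0
    have har : a = r := iterate_eq_root_of_rootDist_le (j := 0) hr (hall a) h0.le
    subst har
    exact hab (Function.iterate_fixed hr k).symm
  have hb : par^[rootDist par r a - k] (par^[k] a) = r := by
    rw [← Function.iterate_add_apply]
    exact iterate_eq_root_of_rootDist_le hr (hall a) (by omega)
  have : rootDist par r (par^[k] a) ≤ rootDist par r a - k := Nat.sInf_le hb
  omega

variable {W : Fin n → Finset V}

lemma exists_deepest_part_meeting (hr : par r = r) (hall : ∀ t, Descend par t r)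
    {U : Finset V} (hU : ∃ t, ∃ u ∈ U, u ∈ W t) :
    ∃ t, (∃ v ∈ U, v ∈ W t) ∧ ∀ u ∈ U, BelowW par W t u → u ∈ W t := by
  obtain ⟨t, ht, hmax⟩ := Set.exists_max_image {t | ∃ u ∈ U, u ∈ W t} (rootDist par r)
    (Set.toFinite _) hU
  refine ⟨t, ht, ?_⟩
  rintro u huU ⟨s, hst, hus⟩
  by_cases hs : s = t
  · exact hs ▸ hus
  · have := hmax s ⟨u, huU, hus⟩
    have := rootDist_lt_of_descend hr hall hst hs
    omega

end Arborescence

section Dicycle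

variable {A B : V → V → Prop} {l : List V} {v : V}

lemma IsDicycle.mono (hAB : ∀ x y, A x y → B x y) (h : IsDicycle A l) : IsDicycle B l :=
  ⟨h.1, h.2.1, List.IsChain.imp hAB h.2.2.1, fun x hx y hy => hAB x y (h.2.2.2 x hx y hy)⟩

lemma IsDicycle.exists_closedWalk (h : IsDicycle A l) (hv : v ∈ l) :
    ∃ l', List.IsChain A (v :: l' ++ [v]) ∧ ∀ x, x ∈ l' ↔ x ∈ l ∧ x ≠ v := by
  obtain ⟨-, hnd, hch, hclose⟩ := h
  obtain ⟨l₁, l₂, rfl⟩ := List.append_of_mem hv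
  obtain ⟨hch₁, hch₂⟩ := List.isChain_split.1 hch
  refine ⟨l₂ ++ l₁, ?_, fun x => ?_⟩
  · have : v :: (l₂ ++ l₁) ++ [v] = (v :: l₂) ++ (l₁ ++ [v]) := by simp
    rw [this]
    refine hch₂.append hch₁ fun x hx y hy => hclose x ?_ y ?_
    · simpa [List.getLast?_append] using hx
    · simpa [List.head?_append] using hy
  · have hvl : v ∉ l₁ ++ l₂ := (List.nodup_cons.1 (List.nodup_middle.1 hnd)).1
    simp only [List.mem_append, List.mem_cons] at hvl ⊢
    by_cases hxv : x = v
    · subst hxv; tauto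
    · tauto

lemma IsDicycle.exists_rel (h : IsDicycle A l) (hv : v ∈ l) : ∃ w, A v w := by
  obtain ⟨l', hl', -⟩ := h.exists_closedWalk hv
  cases l' with
  | nil => exact ⟨v, List.isChain_pair.1 hl'⟩
  | cons w _ => exact ⟨w, (List.isChain_cons_cons.1 hl').1⟩

lemma IsDicycle.exists_ne (h : IsDicycle A l) (hv : v ∈ l) (hloop : ¬ A v v) :
    ∃ u ∈ l, u ≠ v := by
  obtain ⟨l', hl', hmem⟩ := h.exists_closedWalk hv
  cases l' with
  | nil => exact absurd (List.isChain_pair.1 hl') hloop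
  | cons w _ => exact ⟨w, ((hmem w).1 List.mem_cons_self)⟩

end Dicycle

lemma cycleDegree_le_card_s4 {A : V → V → Prop} {v : V} {S : Finset V} (hv : v ∉ S)
    (hS : HitsCyclesThrough A v S) : cycleDegree A v ≤ S.card :=
  Nat.sInf_le ⟨S, rfl, hv, hS⟩

lemma cycleDegree_eq_zero_of_loop {A : V → V → Prop} {v : V} (h : A v v) :
    cycleDegree A v = 0 := by
  refine Nat.sInf_eq_zero.2 (Or.inr (Set.eq_empty_of_forall_notMem ?_))
  rintro m ⟨S, -, hvS, hS⟩
  obtain ⟨u, hu, huS⟩ := hS [v] ⟨List.cons_ne_nil _ _, List.nodup_singleton v,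
    List.isChain_singleton v, by simpa using h⟩ (List.mem_singleton_self v)
  exact hvS (List.mem_singleton.1 hu ▸ huS)

section Decomposition

variable {A : V → V → Prop} {n : ℕ} {r : Fin n} {par : Fin n → Fin n}
  {W X : Fin n → Finset V}

lemma IsDirTreeDecomp.exists_mem_guard (hD : IsDirTreeDecomp A r par W X) {t : Fin n}
    {l : List V} (hl : IsDicycle A l) {v x : V} (hv : v ∈ l) (hvt : BelowW par W t v)
    (hx : x ∈ l) (hxt : ¬ BelowW par W t x) : ∃ u ∈ l, u ≠ v ∧ u ∈ X t := by
  obtain ⟨-, hall, -, huniq, -, hguard⟩ := hD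
  have htr : t ≠ r := by
    rintro rfl
    obtain ⟨s, hs, -⟩ := huniq x
    exact hxt ⟨s, hall s, hs⟩
  have hxv : x ≠ v := by rintro rfl; exact hxt hvt
  obtain ⟨l', hwalk, hmem⟩ := hl.exists_closedWalk hv
  obtain ⟨u, hu, huX⟩ := (hguard t htr).2 (v :: l' ++ [v]) hwalk
    (by simp [hvt]) (by rw [List.getLast?_concat]; simpa using hvt)
    ⟨x, by simpa using (hmem x).2 ⟨hx, hxv⟩, hxt⟩
  have huv : u ≠ v := by rintro rfl; exact (hguard t htr).1 u huX hvt
  have hu' : u ∈ l' := by simpa [huv] using hu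
  exact ⟨u, ((hmem u).1 hu').1, huv, huX⟩

variable [DecidableEq V]

lemma subset_dtdBag_of_part (t : Fin n) : W t ⊆ dtdBag r par W X t := fun _ hx => by
  simp [dtdBag, hx]

lemma subset_dtdBag_of_guard (t : Fin n) : X t ⊆ dtdBag r par W X t := fun _ hx => by
  simp [dtdBag, hx]

lemma card_dtdBag_sub_one_le_dtdWidth (t : Fin n) :
    (dtdBag r par W X t).card - 1 ≤ dtdWidth r par W X :=
  Nat.sub_le_sub_right (Finset.le_sup (f := fun t => (dtdBag r par W X t).card)
    (Finset.mem_univ t)) 1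

lemma IsDirTreeDecomp.hitsCyclesThrough_erase_dtdBag (hD : IsDirTreeDecomp A r par W X)
    {U : Finset V} {E : Finset (V × V)} (hsub : IsSubdigraph A U E) {t : Fin n}
    (hdeep : ∀ u ∈ U, BelowW par W t u → u ∈ W t) {v : V} (hv : v ∈ W t)
    (hloop : ¬ arcRel E v v) :
    HitsCyclesThrough (arcRel E) v ((dtdBag r par W X t).erase v) := by
  intro l hl hvl
  have hvt : BelowW par W t v := ⟨t, .refl, hv⟩
  by_cases hbelow : ∀ x ∈ l, BelowW par W t x
  · obtain ⟨u, hul, huv⟩ := hl.exists_ne hvl hloop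
    obtain ⟨w, huw⟩ := hl.exists_rel hul
    have huW : u ∈ W t := hdeep u (hsub.2 _ huw).2.1 (hbelow u hul)
    exact ⟨u, hul, Finset.mem_erase.2 ⟨huv, subset_dtdBag_of_part t huW⟩⟩
  · push Not at hbelow
    obtain ⟨x, hxl, hxt⟩ := hbelow
    obtain ⟨u, hul, huv, huX⟩ := hD.exists_mem_guard (hl.mono fun x y h => (hsub.2 _ h).1)
      hvl hvt hxl hxt
    exact ⟨u, hul, Finset.mem_erase.2 ⟨huv, subset_dtdBag_of_guard t huX⟩⟩

lemma IsDirTreeDecomp.exists_cycleDegree_le_dtdWidth (hD : IsDirTreeDecomp A r par W X)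
    {U : Finset V} {E : Finset (V × V)} (hsub : IsSubdigraph A U E) :
    ∃ v ∈ U, cycleDegree (arcRel E) v ≤ dtdWidth r par W X := by
  have hmeet : ∃ t, ∃ u ∈ U, u ∈ W t := by
    obtain ⟨u, hu⟩ := hsub.1
    obtain ⟨t, ht, -⟩ := hD.2.2.2.1 u
    exact ⟨t, u, hu, ht⟩
  obtain ⟨t, ⟨v, hvU, hvW⟩, hdeep⟩ := exists_deepest_part_meeting hD.1 hD.2.1 hmeet
  refine ⟨v, hvU, ?_⟩
  by_cases hloop : arcRel E v v
  · simp [cycleDegree_eq_zero_of_loop hloop]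
  calc cycleDegree (arcRel E) v ≤ ((dtdBag r par W X t).erase v).card :=
        cycleDegree_le_card_s4 (Finset.notMem_erase v _)
          (hD.hitsCyclesThrough_erase_dtdBag hsub hdeep hvW hloop)
    _ = (dtdBag r par W X t).card - 1 :=
        Finset.card_erase_of_mem (subset_dtdBag_of_part t hvW)
    _ ≤ dtdWidth r par W X := card_dtdBag_sub_one_le_dtdWidth t

end Decomposition

lemma isDirTreeDecomp_single [Fintype V] [Nonempty V] (A : V → V → Prop) :
    IsDirTreeDecomp A (0 : Fin 1) (fun _ => 0) (fun _ => Finset.univ) (fun _ => ∅) :=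
  ⟨rfl, fun t => Subsingleton.elim t 0 ▸ .refl, fun _ => Finset.univ_nonempty,
    fun v => ⟨0, Finset.mem_univ v, fun t _ => Subsingleton.elim t 0⟩, rfl,
    fun t ht => absurd (Subsingleton.elim t 0) ht⟩

theorem stmt4 [Fintype V] [DecidableEq V] (A : V → V → Prop) :
    cycleDegeneracy A ≤ dirTreewidth A := by
  refine csSup_le' ?_
  rintro m ⟨U, E, hsub, hdeg⟩
  have : Nonempty V := ⟨hsub.1.choose⟩
  refine le_csInf ⟨_, 1, 0, _, _, _, isDirTreeDecomp_single A, rfl⟩ ?_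
  rintro w ⟨n, r, par, W, X, hD, rfl⟩
  obtain ⟨v, hvU, hv⟩ := hD.exists_cycleDegree_le_dtdWidth hsub
  exact (hdeg v hvU).trans hv
end

section
/- For every digraph D, the D-width of D is at least the cycle-degeneracy of D: dw(D) ≥ δ*_c(D). -/
variable {V : Type*}

/-- `D[S]` is strongly connected. -/
def StronglyConnectedOn (A : V → V → Prop) (S : Finset V) : Prop :=
  ∀ x ∈ S, ∀ y ∈ S, Relation.ReflTransGen (fun a b => A a b ∧ a ∈ S ∧ b ∈ S) x y

/-- Adjacency in the support of `S` in the decomposition `(T, X)`. -/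
def SupportAdj {n : ℕ} (T : SimpleGraph (Fin n)) (X : Fin n → Finset V)
    (S : Finset V) (t t' : Fin n) : Prop :=
  T.Adj t t' ∧ ∃ u ∈ S, u ∈ X t ∧ u ∈ X t'

/-- A 𝒟-decomposition of the digraph `A`: a tree `T` with bags `X` such that
for every `S` inducing a strongly connected subdigraph, the support of `S` is
a non-empty connected subgraph of `T`. -/
def IsDDecomp (A : V → V → Prop) {n : ℕ} (T : SimpleGraph (Fin n))
    (X : Fin n → Finset V) : Prop :=
  T.IsTree ∧ ∀ S : Finset V, S.Nonempty → StronglyConnectedOn A S →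
    (∃ t, ∃ u ∈ S, u ∈ X t) ∧
    ∀ t t', (∃ u ∈ S, u ∈ X t) → (∃ u ∈ S, u ∈ X t') →
      Relation.ReflTransGen (SupportAdj T X S) t t'

/-- The width of a 𝒟-decomposition: maximum bag size minus one. -/
def ddWidth {n : ℕ} (X : Fin n → Finset V) : ℕ :=
  (Finset.univ.sup fun t => (X t).card) - 1

/-- The 𝒟-width of the digraph `A`. -/
noncomputable def dWidth (A : V → V → Prop) : ℕ :=
  sInf { w | ∃ (n : ℕ) (T : SimpleGraph (Fin n)) (X : Fin n → Finset V),
    IsDDecomp A T X ∧ ddWidth X = w }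

/-!
Let `(U, E)` be a subdigraph and `(T, X)` a 𝒟-decomposition. Root `T` at `r` and choose
`v ∈ U` whose topmost bag `X t` (the bag containing `v` closest to `r`) is as deep as possible.
Then `X t \ {v}` meets every directed cycle of `E` through `v`: the support of a cycle `C`
avoiding it is a subtree containing `t`, which it can only leave through an edge `t c` with
`v ∈ X c`, hence never towards the root. So all bags meeting `C` lie below `t`, and a vertex
`u ≠ v` of `C` would have a deeper topmost bag than `v`. Hence `v` has cycle-degree at most
`|X t| - 1`.
-/

namespace SimpleGraph

variable {W : Type*} {G : SimpleGraph W}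

lemma Reachable.exists_adj_dist_add_one_eq {t s : W} (h : G.Reachable t s) (hne : s ≠ t) :
    ∃ p, G.Adj p s ∧ G.dist t p + 1 = G.dist t s := by
  obtain ⟨w, hw⟩ := h.exists_walk_length_eq_dist
  have hnil : ¬ w.Nil := fun hnil => hne hnil.eq.symm
  have hp := w.adj_penultimate hnil
  have hle := dist_le w.dropLast
  have htri := (hp.reachable.dist_triangle_right t : G.dist t s ≤ _)
  rw [dist_eq_one_iff_adj.mpr hp] at htri
  have := Walk.length_dropLast_add_one hnil
  exact ⟨_, hp, by omega⟩

lemma IsTree.eq_penultimate_of_adj_of_dist_lt (hG : G.IsTree) {r s p : W} {q : G.Walk r s}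
    (hq : q.IsPath) (hadj : G.Adj s p) (hlt : G.dist r p < G.dist r s) : p = q.penultimate := by
  classical
  refine hG.isAcyclic.eq_penultimate_of_adj_end hq hadj (by_contra fun hp => ?_)
  obtain ⟨w, hw, hwlen⟩ := hG.connected.exists_path_of_dist r p
  have hs := hG.isAcyclic.mem_support_of_ne_mem_support_of_adj_of_isPath hw hq hadj.symm hp
  have := (dist_le (w.takeUntil s hs)).trans (w.length_takeUntil_le_length hs)
  omega

lemma IsTree.eq_of_adj_of_dist_lt (hG : G.IsTree) {r s p p' : W} (hp : G.Adj s p)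
    (hp' : G.Adj s p') (hlt : G.dist r p < G.dist r s) (hlt' : G.dist r p' < G.dist r s) :
    p = p' := by
  obtain ⟨q, hq, -⟩ := hG.connected.exists_path_of_dist r s
  rw [hG.eq_penultimate_of_adj_of_dist_lt hq hp hlt,
    hG.eq_penultimate_of_adj_of_dist_lt hq hp' hlt']

/-- With `G` rooted at `r`, the equation `dist r s = dist r t + dist t s` says that `s` lies in
the subtree below `t`; the only edge leaving that subtree joins `t` to its parent. -/
lemma IsTree.eq_and_dist_lt_of_adj_of_dist_add_dist_ne (hG : G.IsTree) {r t s s' : W}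
    (hs : G.dist r s = G.dist r t + G.dist t s) (hadj : G.Adj s s')
    (hs' : G.dist r s' ≠ G.dist r t + G.dist t s') : s = t ∧ G.dist r s' < G.dist r t := by
  have hconn := hG.connected
  have hstep := hG.dist_eq_dist_add_one_of_adj r hadj
  have htri : G.dist r s' ≤ G.dist r t + G.dist t s' := hconn.dist_triangle (v := t)
  have htri' : G.dist t s' ≤ G.dist t s + G.dist s s' := hconn.dist_triangle (v := s)
  rw [dist_eq_one_iff_adj.mpr hadj] at htri'
  have hparent : G.dist r s' + 1 = G.dist r s := by omega
  by_cases hst : s = t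
  · subst hst
    exact ⟨rfl, by simp only [dist_self] at hs; omega⟩
  obtain ⟨p, hps, hp⟩ := (hconn t s).exists_adj_dist_add_one_eq hst
  have htri'' : G.dist r p ≤ G.dist r t + G.dist t p := hconn.dist_triangle (v := t)
  obtain rfl := hG.eq_of_adj_of_dist_lt (r := r) hps.symm hadj (by omega) (by omega)
  omega

end SimpleGraph

section Dicycle

variable {α : Type*} {R : α → α → Prop} {l : List α}

lemma isDicycle_singleton {a : α} (h : R a a) : IsDicycle R [a] :=
  ⟨List.cons_ne_nil _ _, List.nodup_singleton a, List.isChain_singleton a, by simpa using h⟩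

lemma IsDicycle.transGen (hl : IsDicycle R l) {x y : α} (hx : x ∈ l) (hy : y ∈ l) :
    Relation.TransGen (fun a b => R a b ∧ a ∈ l ∧ b ∈ l) x y := by
  obtain ⟨hne, -, hchain, hwrap⟩ := hl
  have hchain' : l.IsChain (fun a b => R a b ∧ a ∈ l ∧ b ∈ l) :=
    List.IsChain.imp_of_mem_imp (fun a b ha hb hab => ⟨hab, ha, hb⟩) hchain
  have hlast := hchain'.backwards_induction (Relation.ReflTransGen _ · (l.getLast hne)) l
    (fun _ _ hab h => h.head hab) (fun _ => .refl) x hx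
  have hhead := hchain'.induction (Relation.ReflTransGen _ (l.head hne) ·) l
    (fun _ _ hab h => h.tail hab) (fun _ => .refl) y hy
  have hback : R (l.getLast hne) (l.head hne) :=
    hwrap _ (List.getLast?_eq_some_getLast hne) _ (List.head?_eq_some_head hne)
  exact (Relation.TransGen.tail' hlast ⟨hback, List.getLast_mem hne, List.head_mem hne⟩).trans_left
    hhead

lemma IsDicycle.exists_rel_mem (hl : IsDicycle R l) {x : α} (hx : x ∈ l) : ∃ y ∈ l, R y x := by
  obtain ⟨y, -, hyx, hy, -⟩ := Relation.TransGen.tail'_iff.mp (hl.transGen hx hx)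
  exact ⟨y, hy, hyx⟩

lemma IsDicycle.rel_self_of_forall_eq (hl : IsDicycle R l) {a : α} (h : ∀ x ∈ l, x = a) :
    R a a := by
  obtain ⟨hne, -, -, hwrap⟩ := hl
  have hback := hwrap _ (List.getLast?_eq_some_getLast hne) _ (List.head?_eq_some_head hne)
  rwa [h _ (List.getLast_mem hne), h _ (List.head_mem hne)] at hback

lemma IsDicycle.stronglyConnectedOn_toFinset [DecidableEq α] {A : α → α → Prop}
    (hl : IsDicycle R l) (hRA : ∀ a b, R a b → A a b) : StronglyConnectedOn A l.toFinset :=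
  fun x hx y hy => Relation.TransGen.to_reflTransGen <|
    Relation.TransGen.mono (fun a b ⟨hab, ha, hb⟩ =>
      ⟨hRA a b hab, List.mem_toFinset.mpr ha, List.mem_toFinset.mpr hb⟩) x y
    (hl.transGen (List.mem_toFinset.mp hx) (List.mem_toFinset.mp hy))

/-- No set avoiding `a` meets the loop `[a]`, so the set in `cycleDegree` is empty and its
`sInf` is the junk value `0`. -/
lemma cycleDegree_eq_zero_of_rel_self {a : α} (h : R a a) : cycleDegree R a = 0 := by
  refine Nat.sInf_eq_zero.mpr (.inr (Set.eq_empty_of_forall_notMem ?_))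
  rintro k ⟨S, -, haS, hhits⟩
  obtain ⟨u, hu, huS⟩ := hhits [a] (isDicycle_singleton h) (List.mem_singleton_self a)
  exact haS (List.mem_singleton.mp hu ▸ huS)

end Dicycle

lemma IsSubdigraph.mem_of_mem_isDicycle {A : V → V → Prop} {U : Finset V} {E : Finset (V × V)}
    (hUE : IsSubdigraph A U E) {l : List V} (hl : IsDicycle (arcRel E) l) {x : V} (hx : x ∈ l) :
    x ∈ U := by
  obtain ⟨y, -, hyx⟩ := hl.exists_rel_mem hx
  exact (hUE.2 _ hyx).2.2

section Decomposition

variable {ι : Type*}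

/-- The depth below `r` of the topmost bag containing `v` (junk value `0` if there is none). -/
noncomputable def bagDepth (T : SimpleGraph ι) (X : ι → Finset V) (r : ι) (v : V) : ℕ :=
  sInf {k | ∃ t, v ∈ X t ∧ T.dist r t = k}

lemma bagDepth_le {T : SimpleGraph ι} {X : ι → Finset V} (r : ι) {v : V} {t : ι} (h : v ∈ X t) :
    bagDepth T X r v ≤ T.dist r t :=
  Nat.sInf_le ⟨t, h, rfl⟩

lemma exists_dist_eq_bagDepth {T : SimpleGraph ι} {X : ι → Finset V} (r : ι) {v : V}
    (h : ∃ t, v ∈ X t) : ∃ t, v ∈ X t ∧ T.dist r t = bagDepth T X r v := by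
  obtain ⟨t, ht⟩ := h
  exact Nat.sInf_mem (s := {k | ∃ t, v ∈ X t ∧ T.dist r t = k}) ⟨_, t, ht, rfl⟩

lemma card_sub_one_le_ddWidth {n : ℕ} (X : Fin n → Finset V) (t : Fin n) :
    (X t).card - 1 ≤ ddWidth X :=
  Nat.sub_le_sub_right (Finset.le_sup (f := fun t => (X t).card) (Finset.mem_univ t)) 1

lemma isDDecomp_bot_univ [Fintype V] (A : V → V → Prop) :
    IsDDecomp A (⊥ : SimpleGraph (Fin 1)) fun _ => Finset.univ := by
  refine ⟨.of_subsingleton, fun S ⟨u, hu⟩ _ => ⟨⟨0, u, hu, Finset.mem_univ u⟩, fun t t' _ _ => ?_⟩⟩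
  rw [Subsingleton.elim t t']

variable {n : ℕ} {T : SimpleGraph (Fin n)} {X : Fin n → Finset V}

lemma IsDDecomp.exists_mem_bag {A : V → V → Prop} (hX : IsDDecomp A T X) (v : V) :
    ∃ t, v ∈ X t := by
  have hsingle : StronglyConnectedOn A {v} := by
    rintro x hx y hy
    rw [Finset.mem_singleton.mp hx, Finset.mem_singleton.mp hy]
  obtain ⟨t, u, hu, hut⟩ := (hX.2 {v} (Finset.singleton_nonempty v) hsingle).1
  exact ⟨t, Finset.mem_singleton.mp hu ▸ hut⟩

lemma dist_eq_dist_add_dist_of_reflTransGen_supportAdj (hT : T.IsTree) {S : Finset V}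
    {r t s : Fin n} {v : V} (hsep : ∀ u ∈ S, u ∈ X t → u = v)
    (htop : ∀ c, v ∈ X c → T.dist r t ≤ T.dist r c)
    (h : Relation.ReflTransGen (SupportAdj T X S) t s) :
    T.dist r s = T.dist r t + T.dist t s := by
  induction h with
  | refl => simp
  | tail _ hstep ih =>
    obtain ⟨hadj, z, hzS, hzb, hzc⟩ := hstep
    by_contra hleave
    obtain ⟨rfl, hlt⟩ := hT.eq_and_dist_lt_of_adj_of_dist_add_dist_ne ih hadj hleave
    have := htop _ (hsep z hzS hzb ▸ hzc)
    omega

lemma IsDDecomp.dist_lt_of_mem_bag {A : V → V → Prop} (hX : IsDDecomp A T X) {S : Finset V}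
    (hS : StronglyConnectedOn A S) {r t : Fin n} {v : V} (hv : v ∈ S) (hvt : v ∈ X t)
    (hsep : ∀ u ∈ S, u ∈ X t → u = v) (htop : ∀ c, v ∈ X c → T.dist r t ≤ T.dist r c)
    {u : V} (hu : u ∈ S) (huv : u ≠ v) {c : Fin n} (huc : u ∈ X c) :
    T.dist r t < T.dist r c := by
  have hreach := (hX.2 S ⟨v, hv⟩ hS).2 t c ⟨v, hv, hvt⟩ ⟨u, hu, huc⟩
  have hbelow := dist_eq_dist_add_dist_of_reflTransGen_supportAdj hX.1 hsep htop hreach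
  have hct : t ≠ c := fun htc => huv (hsep u hu (htc ▸ huc))
  have := hX.1.connected.pos_dist_of_ne hct
  omega

lemma IsDDecomp.exists_cycleDegree_le_ddWidth [DecidableEq V] {A : V → V → Prop}
    (hX : IsDDecomp A T X) {U : Finset V} {E : Finset (V × V)} (hUE : IsSubdigraph A U E) :
    ∃ v ∈ U, cycleDegree (arcRel E) v ≤ ddWidth X := by
  obtain ⟨r⟩ := hX.1.connected.nonempty
  obtain ⟨v, hvU, hvmax⟩ := U.exists_max_image (bagDepth T X r) hUE.1
  obtain ⟨t, hvt, ht⟩ := exists_dist_eq_bagDepth (T := T) r (hX.exists_mem_bag v)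
  refine ⟨v, hvU, le_trans ?_ (card_sub_one_le_ddWidth X t)⟩
  by_cases hloop : arcRel E v v
  · simp [cycleDegree_eq_zero_of_rel_self hloop]
  refine Nat.sInf_le ⟨_, Finset.card_erase_of_mem hvt, Finset.notMem_erase v _,
    fun l hl hvl => by_contra fun hmiss => hloop (hl.rel_self_of_forall_eq fun u hu => ?_)⟩
  simp only [not_exists, not_and] at hmiss
  have hsep : ∀ u ∈ l.toFinset, u ∈ X t → u = v := fun u hu hut =>
    by_contra fun huv => hmiss u (List.mem_toFinset.mp hu) (Finset.mem_erase.mpr ⟨huv, hut⟩)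
  by_contra huv
  obtain ⟨c, huc, hc⟩ := exists_dist_eq_bagDepth (T := T) r (hX.exists_mem_bag u)
  have hdeeper := hX.dist_lt_of_mem_bag
    (hl.stronglyConnectedOn_toFinset fun a b h => (hUE.2 _ h).1) (List.mem_toFinset.mpr hvl) hvt hsep
    (fun c hc => ht ▸ bagDepth_le r hc) (List.mem_toFinset.mpr hu) huv huc
  have := hvmax u (hUE.mem_of_mem_isDicycle hl hu)
  omega

end Decomposition

theorem stmt5 [Fintype V] [DecidableEq V] (A : V → V → Prop) :
    cycleDegeneracy A ≤ dWidth A := by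
  refine csSup_le' ?_
  rintro m ⟨U, E, hUE, hdeg⟩
  refine le_csInf ⟨_, 1, ⊥, fun _ => Finset.univ, isDDecomp_bot_univ A, rfl⟩ ?_
  rintro w ⟨n, T, X, hX, rfl⟩
  obtain ⟨v, hvU, hv⟩ := hX.exists_cycleDegree_le_ddWidth hUE
  exact (hdeg v hvU).trans hv
end

section
/- Let D be a digraph with a cycle-degeneracy ordering v_1, …, v_n (i.e., for each i there is a set X_i ⊆ {v_{i+1},…,v_n} with |X_i| ≤ δ*_c(D) such that every directed cycle of D containing v_i intersects {v_1,…,v_{i−1}} ∪ X_i). Let G be the undirected graph on V(D) with edges {v_i v_j : v_j ∈ X_i}. Then every proper colouring of G is a dicolouring of D. -/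
/-! Let `v_i` be the earliest vertex of a directed cycle in the ordering. The cycle cannot meet an
earlier vertex, so it meets `X_i`: it contains an edge `v_i u` of `G`, whose ends a proper
colouring of `G` separates. -/

variable {V : Type*}

namespace IsDicycle

variable {A B : V → V → Prop} {l : List V}

theorem mono_s8 (hl : IsDicycle A l) (hAB : ∀ x y, A x y → B x y) : IsDicycle B l :=
  ⟨hl.1, hl.2.1, hl.2.2.1.imp hAB, fun x hx y hy => hAB x y (hl.2.2.2 x hx y hy)⟩

theorem forall_mem_of_arc_imp {P : V → Prop} (hl : IsDicycle A l)
    (hP : ∀ x y, A x y → P y) : ∀ x ∈ l, P x :=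
  hl.2.2.1.induction P l (fun x y hxy _ => hP x y hxy) fun hne =>
    hP _ _ (hl.2.2.2 _ (List.getLast?_eq_some_getLast hne) _ (List.head?_eq_some_head hne))

theorem exists_mem_inter_of_ordering {ι : Type*} [LinearOrder ι] [WellFoundedLT ι]
    {e : ι → V} (he : Function.Surjective e) {X : ι → Finset V}
    (hhit : ∀ i, ∀ l : List V, IsDicycle A l → e i ∈ l →
      ∃ x ∈ l, x ∈ X i ∨ ∃ j, j < i ∧ e j = x)
    (hl : IsDicycle A l) : ∃ i, e i ∈ l ∧ ∃ u ∈ l, u ∈ X i := by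
  obtain ⟨v, hv⟩ := List.exists_mem_of_ne_nil l hl.1
  obtain ⟨i, hil, hmin⟩ := wellFounded_lt.has_min {i | e i ∈ l} ⟨_, (he v).choose_spec ▸ hv⟩
  obtain ⟨x, hxl, hxX | ⟨j, hji, rfl⟩⟩ := hhit i l hl hil
  · exact ⟨i, hil, x, hxl, hxX⟩
  · exact absurd hji (hmin j hxl)

end IsDicycle

theorem isDicolouring_of_forall_isDicycle {C : Type*} {A : V → V → Prop} {φ : V → C}
    (h : ∀ l, IsDicycle A l → ∃ x ∈ l, ∃ y ∈ l, φ x ≠ φ y) : IsDicolouring A φ := by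
  rintro c ⟨l, hl⟩
  have hc : ∀ x ∈ l, φ x = c := hl.forall_mem_of_arc_imp fun _ _ h => h.2.2
  obtain ⟨x, hx, y, hy, hxy⟩ := h l (hl.mono_s8 fun _ _ h => h.1)
  exact hxy ((hc x hx).trans (hc y hy).symm)

theorem stmt8_general (A : V → V → Prop) (n : ℕ)
    (e : Fin n ≃ V) (X : Fin n → Finset V)
    (hhit : ∀ i, ∀ l : List V, IsDicycle A l → e i ∈ l →
      ∃ x ∈ l, x ∈ X i ∨ ∃ j, j < i ∧ e j = x)
    {C : Type*} (φ : V → C)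
    (hφ : ∀ i, ∀ u ∈ X i, φ (e i) ≠ φ u) :
    IsDicolouring A φ :=
  isDicolouring_of_forall_isDicycle fun _ hl =>
    let ⟨i, hil, u, hul, hu⟩ := hl.exists_mem_inter_of_ordering e.surjective hhit
    ⟨e i, hil, u, hul, hφ i u hu⟩

theorem stmt8 [Fintype V] [DecidableEq V] (A : V → V → Prop) (n : ℕ)
    (e : Fin n ≃ V) (X : Fin n → Finset V)
    (hcard : ∀ i, (X i).card ≤ cycleDegeneracy A)
    (hlater : ∀ i, ∀ u ∈ X i, ∃ j, i < j ∧ e j = u)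
    (hhit : ∀ i, ∀ l : List V, IsDicycle A l → e i ∈ l →
      ∃ x ∈ l, x ∈ X i ∨ ∃ j, j < i ∧ e j = x)
    {C : Type*} (φ : V → C)
    (hφ : ∀ i, ∀ u ∈ X i, φ (e i) ≠ φ u) :
    IsDicolouring A φ :=
  stmt8_general A n e X hhit φ hφ
end

section
/- Let D be a digraph, k ≥ χ⃗_g(D) + 1, where χ⃗_g(D) is the digrundy number of D. Then the k-dicolouring graph of D has diameter at most 4·χ⃗(D)·n, where n = |V(D)| and χ⃗(D) is the dichromatic number. -/
/-!
Fix a `χ⃗(D)`-dicolouring `γ` and peel off its colour classes. Suppose `α` and `β` agree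
outside the set `W` of vertices of colour `< p`, and `χ⃗_g(D[W]) ≤ p - 1`. Recolouring the
vertices of `W` one by one, in increasing order of colour, each to the least colour it can take,
reaches a greedy dicolouring of `D[W]` in `|W|` steps; it only uses colours `< p - 1`, so colour
`p - 1` is free on `W`, and a maximal acyclic set `Y ⊆ W` containing a colour class of `γ` can be
moved onto it in `|Y|` further steps. Doing this from `α` and from `β`, the two results agree
outside `W \ Y`, on which `γ` uses one colour less and `χ⃗_g` has also dropped: by maximality
of `Y`, a greedy dicolouring of `D[W \ Y]` shifted up by one, with `Y` as colour `0`, is a greedy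
dicolouring of `D[W]`. Each of the `χ⃗(D)` rounds costs `2 (|W| + |Y|) ≤ 4 |W|` steps.
-/

variable {V : Type*}

/-- One step in the `k`-dicolouring graph: both are dicolourings and they
differ on exactly one vertex. -/
def DicolStep (A : V → V → Prop) {k : ℕ} (α β : V → Fin k) : Prop :=
  IsDicolouring A α ∧ IsDicolouring A β ∧ ∃! v, α v ≠ β v

/-- `l` is (the list of successive colourings of) a redicolouring sequence from
`α` to `β`. -/
def RedicolPath (A : V → V → Prop) {k : ℕ} (α β : V → Fin k)
    (l : List (V → Fin k)) : Prop :=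
  List.Chain (DicolStep A) α l ∧ (α :: l).getLast (List.cons_ne_nil _ _) = β

/-- A greedy dicolouring: there is an ordering (given by an injective rank
function `o`) such that, for each vertex `v` and each colour `c < φ v`, the set
of earlier vertices coloured `c`, together with `v`, contains a directed
cycle. -/
def IsGreedy (A : V → V → Prop) {k : ℕ} (φ : V → Fin k) : Prop :=
  IsDicolouring A φ ∧ ∃ o : V → ℕ, Function.Injective o ∧
    ∀ v : V, ∀ c : Fin k, c < φ v →
      ∃ l, IsDicycle A l ∧ ∀ x ∈ l, (o x < o v ∧ φ x = c) ∨ x = v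

/-- The digrundy number: the maximum number of colours used by a greedy
dicolouring. -/
noncomputable def digrundy [Fintype V] (A : V → V → Prop) : ℕ :=
  sSup { m | ∃ (k : ℕ) (φ : V → Fin k),
    IsGreedy A φ ∧ (Finset.univ.image φ).card = m }

open Function SimpleGraph

section Acyclicity

variable {A : V → V → Prop}

def AcyclicOn (A : V → V → Prop) (S : Set V) : Prop :=
  ∀ l : List V, IsDicycle A l → ¬ ∀ x ∈ l, x ∈ S

lemma not_acyclicOn_iff {S : Set V} :
    ¬ AcyclicOn A S ↔ ∃ l : List V, IsDicycle A l ∧ ∀ x ∈ l, x ∈ S := by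
  simp [AcyclicOn]

lemma AcyclicOn.mono {S T : Set V} (hT : AcyclicOn A T) (hST : S ⊆ T) : AcyclicOn A S :=
  fun l hl hS => hT l hl fun x hx => hST (hS x hx)

lemma isDicycle_restrict_iff {P : V → Prop} {l : List V} :
    IsDicycle (fun x y => A x y ∧ P x ∧ P y) l ↔ IsDicycle A l ∧ ∀ x ∈ l, P x := by
  constructor
  · rintro ⟨hne, hnd, hchain, hwrap⟩
    refine ⟨⟨hne, hnd, List.IsChain.imp (fun _ _ h => h.1) hchain,
      fun x hx y hy => (hwrap x hx y hy).1⟩, ?_⟩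
    refine List.IsChain.induction P l hchain (fun _ _ h _ => h.2.2) fun hne' => ?_
    exact (hwrap _ (List.getLast?_eq_some_getLast hne') _ (List.head?_eq_some_head hne')).2.2
  · rintro ⟨⟨hne, hnd, hchain, hwrap⟩, hP⟩
    refine ⟨hne, hnd, ?_, fun x hx y hy =>
      ⟨hwrap x hx y hy, hP x (List.mem_of_getLast? hx), hP y (List.mem_of_mem_head? hy)⟩⟩
    exact (List.IsChain.iff_mem.mp hchain).imp fun x y h => ⟨h.2.2, hP x h.1, hP y h.2.1⟩

lemma acyclic_restrict_iff {S : Set V} :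
    Acyclic (fun x y => A x y ∧ x ∈ S ∧ y ∈ S) ↔ AcyclicOn A S := by
  simp [Acyclic, AcyclicOn, isDicycle_restrict_iff]

lemma isDicolouring_iff_acyclicOn {C : Type*} {φ : V → C} :
    IsDicolouring A φ ↔ ∀ c, AcyclicOn A {v | φ v = c} :=
  forall_congr' fun _ => acyclic_restrict_iff

lemma IsDicolouring.acyclicOn {k : ℕ} {φ : V → Fin k} (hφ : IsDicolouring A φ) (W : Finset V)
    (c : ℕ) : AcyclicOn A {v | v ∈ W ∧ (φ v : ℕ) = c} := by
  intro l hl hall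
  obtain ⟨x₀, hx₀⟩ := List.exists_mem_of_ne_nil l hl.1
  exact isDicolouring_iff_acyclicOn.mp hφ (φ x₀) l hl fun x hx =>
    Fin.ext ((hall x hx).2.trans (hall x₀ hx₀).2.symm)

lemma isDicolouring_update_iff [DecidableEq V] {C : Type*} {g : V → C}
    (hg : IsDicolouring A g) {a : V} {c : C} :
    IsDicolouring A (update g a c) ↔ AcyclicOn A (insert a {v | g v = c}) := by
  rw [isDicolouring_iff_acyclicOn] at hg ⊢
  refine ⟨fun h => (h c).mono ?_, fun h d => ?_⟩
  · rintro v (rfl | hv)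
    · simp
    · by_cases hva : v = a
      · simp [hva]
      · simpa [update_of_ne hva] using hv
  · rcases eq_or_ne d c with rfl | hdc
    · refine h.mono fun v hv => ?_
      by_cases hva : v = a
      · exact Or.inl hva
      · exact Or.inr (by simpa [update_of_ne hva] using hv)
    · refine (hg d).mono fun v hv => ?_
      have hva : v ≠ a := by
        rintro rfl
        exact hdc (by simpa using hv.symm)
      simpa [update_of_ne hva] using hv

lemma exists_maximal_acyclicOn {X W : Finset V} (hXW : X ⊆ W) (hX : AcyclicOn A X) :
    ∃ Y : Finset V, X ⊆ Y ∧ Y ⊆ W ∧ AcyclicOn A Y ∧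
      ∀ v ∈ W, v ∉ Y → ¬ AcyclicOn A (insert v (Y : Set V)) := by
  classical
  obtain ⟨Y, hXY, hYmem, hYmax⟩ :=
    (W.powerset.filter fun Z : Finset V => AcyclicOn A (Z : Set V)).exists_le_maximal
      (a := X) (by simpa [hXW] using hX)
  simp only [Finset.mem_filter, Finset.mem_powerset] at hYmem hYmax
  refine ⟨Y, hXY, hYmem.1, hYmem.2, fun v hvW hvY hv => hvY ?_⟩
  have := hYmax ⟨Finset.insert_subset hvW hYmem.1, by simpa using hv⟩ (Finset.subset_insert v Y)
  exact this (Finset.mem_insert_self v Y)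

end Acyclicity

section Greedy

variable {A : V → V → Prop}

/-- A greedy dicolouring of `D[W]` along the rank function `o`, which unlike in `IsGreedy` need
not be injective. -/
structure IsGreedyOn (A : V → V → Prop) (W : Finset V) (ψ o : V → ℕ) : Prop where
  acyclicOn : ∀ c, AcyclicOn A {v | v ∈ W ∧ ψ v = c}
  exists_dicycle : ∀ v ∈ W, ∀ c < ψ v,
    ∃ l, IsDicycle A l ∧ ∀ x ∈ l, x = v ∨ (x ∈ W ∧ o x < o v ∧ ψ x = c)

/-- `χ⃗_g(D[W]) ≤ b`: colours are `0, 1, …`, so `ψ v < b` means at most `b` colours. -/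
def DigrundyLE (A : V → V → Prop) (W : Finset V) (b : ℕ) : Prop :=
  ∀ ψ o, IsGreedyOn A W ψ o → ∀ v ∈ W, ψ v < b

lemma DigrundyLE.mono {W : Finset V} {b b' : ℕ} (h : DigrundyLE A W b) (hb : b ≤ b') :
    DigrundyLE A W b' :=
  fun ψ o hψ v hv => (h ψ o hψ v hv).trans_le hb

lemma IsGreedyOn.exists_eq_of_lt {W : Finset V} {ψ o : V → ℕ} (h : IsGreedyOn A W ψ o)
    {v : V} {c : ℕ} (hv : v ∈ W) (hc : c < ψ v) : ∃ x ∈ W, ψ x = c := by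
  obtain ⟨l, hl, hx⟩ := h.exists_dicycle v hv c hc
  by_contra! hne
  refine h.acyclicOn (ψ v) l hl fun x hxl => ?_
  rcases hx x hxl with rfl | ⟨hxW, -, hψx⟩
  · exact ⟨hv, rfl⟩
  · exact absurd hψx (hne x hxW)

lemma exists_injective_refinement [Fintype V] (f : V → ℕ) :
    ∃ g : V → ℕ, Injective g ∧ ∀ x y, f x < f y → g x < g y := by
  let e := Fintype.equivFin V
  have hlt : ∀ x y, f x < f y → f x * Fintype.card V + e x < f y * Fintype.card V + e y :=
    fun x y h => by nlinarith [(e x).isLt]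
  refine ⟨fun v => f v * Fintype.card V + e v, fun x y hxy => ?_, hlt⟩
  have hf : f x = f y := by
    rcases lt_trichotomy (f x) (f y) with h | h | h
    · exact absurd hxy (hlt x y h).ne
    · exact h
    · exact absurd hxy (hlt y x h).ne'
  simp only [hf, Nat.add_left_cancel_iff] at hxy
  exact e.injective (Fin.ext hxy)

lemma digrundyLE_univ [Fintype V] : DigrundyLE A Finset.univ (digrundy A) := by
  intro ψ o hψ v _
  obtain ⟨v₀, -, hv₀⟩ := Finset.univ.exists_max_image ψ ⟨v, Finset.mem_univ v⟩
  obtain ⟨o', ho'inj, ho'⟩ := exists_injective_refinement o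
  let φ : V → Fin (ψ v₀ + 1) := fun u => ⟨ψ u, Nat.lt_succ_of_le (hv₀ u (Finset.mem_univ u))⟩
  have hφ : IsGreedy A φ := by
    refine ⟨isDicolouring_iff_acyclicOn.mpr fun c => (hψ.acyclicOn c).mono fun u hu =>
      ⟨Finset.mem_univ u, congrArg Fin.val hu⟩, o', ho'inj, fun u c hc => ?_⟩
    obtain ⟨l, hl, hx⟩ := hψ.exists_dicycle u (Finset.mem_univ u) c hc
    refine ⟨l, hl, fun x hxl => ?_⟩
    rcases hx x hxl with rfl | ⟨-, hox, hψx⟩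
    · exact Or.inr rfl
    · exact Or.inl ⟨ho' x u hox, Fin.ext hψx⟩
  have hsurj : Finset.univ.image φ = Finset.univ := by
    refine Finset.eq_univ_of_forall fun c => Finset.mem_image.mpr ?_
    rcases (Nat.lt_succ_iff.mp c.isLt).lt_or_eq with hc | hc
    · obtain ⟨x, -, hx⟩ := hψ.exists_eq_of_lt (Finset.mem_univ v₀) hc
      exact ⟨x, Finset.mem_univ x, Fin.ext hx⟩
    · exact ⟨v₀, Finset.mem_univ v₀, Fin.ext hc.symm⟩
  have hle : ψ v₀ + 1 ≤ digrundy A := by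
    refine le_csSup ⟨Fintype.card V, ?_⟩
      ⟨_, φ, hφ, by rw [hsurj, Finset.card_univ, Fintype.card_fin]⟩
    rintro m ⟨_, φ', -, rfl⟩
    exact Finset.card_image_le.trans Finset.card_univ.le
  exact (Nat.lt_succ_of_le (hv₀ v (Finset.mem_univ v))).trans_le hle

end Greedy

section Dicolourable

variable {A : V → V → Prop} {W : Finset V}

def DicolourableOn (A : V → V → Prop) (W : Finset V) (c : ℕ) : Prop :=
  ∃ γ : V → ℕ, (∀ v ∈ W, γ v < c) ∧ ∀ i, AcyclicOn A {v | v ∈ W ∧ γ v = i}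

lemma IsDicolouring.dicolourableOn {c : ℕ} {γ : V → Fin c} (hγ : IsDicolouring A γ)
    (W : Finset V) : DicolourableOn A W c :=
  ⟨fun v => γ v, fun v _ => (γ v).isLt, hγ.acyclicOn W⟩

lemma DicolourableOn.eq_empty (h : DicolourableOn A W 0) : W = ∅ := by
  obtain ⟨γ, hγ, -⟩ := h
  exact Finset.eq_empty_of_forall_notMem fun v hv => Nat.not_lt_zero _ (hγ v hv)

variable [DecidableEq V]

lemma DicolourableOn.exists_acyclicOn_sdiff {c : ℕ} (h : DicolourableOn A W (c + 1)) :
    ∃ X ⊆ W, AcyclicOn A X ∧ ∀ Y : Finset V, X ⊆ Y → DicolourableOn A (W \ Y) c := by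
  obtain ⟨γ, hγc, hγ⟩ := h
  refine ⟨W.filter (γ · = c), Finset.filter_subset _ _, by rw [Finset.coe_filter]; exact hγ c,
    fun Y hXY => ⟨γ, fun v hv => ?_, fun i => (hγ i).mono fun v ⟨hv, hi⟩ =>
      ⟨(Finset.mem_sdiff.mp hv).1, hi⟩⟩⟩
  obtain ⟨hvW, hvY⟩ := Finset.mem_sdiff.mp hv
  have hne : γ v ≠ c := fun hvc => hvY (hXY (Finset.mem_filter.mpr ⟨hvW, hvc⟩))
  have := hγc v hvW
  omega

end Dicolourable

section Peeling

variable [DecidableEq V] {A : V → V → Prop} {W Y : Finset V}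

lemma IsGreedyOn.prepend_acyclic {ψ o : V → ℕ} (h : IsGreedyOn A (W \ Y) ψ o) (hYW : Y ⊆ W)
    (hY : AcyclicOn A Y) (hmax : ∀ v ∈ W, v ∉ Y → ¬ AcyclicOn A (insert v (Y : Set V))) :
    IsGreedyOn A W (fun v => if v ∈ Y then 0 else ψ v + 1)
      (fun v => if v ∈ Y then 0 else o v + 1) where
  acyclicOn
    | 0 => hY.mono fun v ⟨_, hv⟩ => by
        by_contra hvY
        simp [Finset.mem_coe.not.mp hvY] at hv
    | c + 1 => (h.acyclicOn c).mono fun v ⟨hvW, hv⟩ => by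
        by_cases hvY : v ∈ Y
        · simp [hvY] at hv
        · simp only [hvY, if_false, Nat.add_right_cancel_iff] at hv
          exact ⟨Finset.mem_sdiff.mpr ⟨hvW, hvY⟩, hv⟩
  exists_dicycle v hvW c hc := by
    have hvY : v ∉ Y := fun hvY => by simp [hvY] at hc
    simp only [hvY, if_false] at hc ⊢
    rcases c with _ | c
    · obtain ⟨l, hl, hlY⟩ := not_acyclicOn_iff.mp (hmax v hvW hvY)
      refine ⟨l, hl, fun x hx => (hlY x hx).imp id fun hxY => ?_⟩
      rw [Finset.mem_coe] at hxY
      exact ⟨hYW hxY, by simp [hxY], by simp [hxY]⟩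
    · obtain ⟨l, hl, hx⟩ := h.exists_dicycle v (Finset.mem_sdiff.mpr ⟨hvW, hvY⟩) c (by omega)
      refine ⟨l, hl, fun x hxl => (hx x hxl).imp id fun ⟨hxW, hox, hψx⟩ => ?_⟩
      have hxY := (Finset.mem_sdiff.mp hxW).2
      exact ⟨(Finset.mem_sdiff.mp hxW).1, by simp [hxY, hox], by simp [hxY, hψx]⟩

lemma DigrundyLE.sdiff {b : ℕ} (h : DigrundyLE A W b) (hYW : Y ⊆ W) (hY : AcyclicOn A Y)
    (hmax : ∀ v ∈ W, v ∉ Y → ¬ AcyclicOn A (insert v (Y : Set V))) :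
    DigrundyLE A (W \ Y) (b - 1) := by
  intro ψ o hψ v hv
  have hvY := (Finset.mem_sdiff.mp hv).2
  have := h _ _ (hψ.prepend_acyclic hYW hY hmax) v (Finset.mem_sdiff.mp hv).1
  simp only [hvY, if_false] at this
  omega

end Peeling

section DicolouringGraph

variable {A : V → V → Prop} {k : ℕ}

lemma DicolStep.symm {α β : V → Fin k} (h : DicolStep A α β) : DicolStep A β α := by
  obtain ⟨hα, hβ, v, hv, huniq⟩ := h
  exact ⟨hβ, hα, v, Ne.symm hv, fun w hw => huniq w (Ne.symm hw)⟩

/-- The `k`-dicolouring graph. Non-dicolourings are isolated vertices, so distances between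
dicolourings are those of the paper's `D_k(D)`. -/
def dicolouringGraph (A : V → V → Prop) (k : ℕ) : SimpleGraph (V → Fin k) where
  Adj := DicolStep A
  symm := ⟨fun _ _ => DicolStep.symm⟩
  loopless := ⟨fun _ ⟨_, _, _, hv, _⟩ => hv rfl⟩

lemma exists_redicolPath_of_edist_le {α β : V → Fin k} {n : ℕ}
    (h : (dicolouringGraph A k).edist α β ≤ n) :
    ∃ l, RedicolPath A α β l ∧ l.length ≤ n := by
  have hreach := reachable_of_edist_ne_top (h.trans_lt (ENat.natCast_lt_top n)).ne
  obtain ⟨p, hp⟩ := hreach.exists_walk_length_eq_edist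
  refine ⟨p.support.tail, ⟨?_, ?_⟩, ?_⟩
  · have := p.isChain_adj_support
    rw [← p.cons_tail_support] at this
    exact this
  · simp only [p.cons_tail_support, p.getLast_support]
  · rw [List.length_tail, p.length_support, Nat.add_sub_cancel]
    exact_mod_cast hp.trans_le h

variable [DecidableEq V]

lemma edist_update_le {φ g : V → Fin k} (hg : IsDicolouring A g) {a : V} {c : Fin k}
    (hg' : IsDicolouring A (update g a c)) :
    (dicolouringGraph A k).edist φ (update g a c) ≤ (dicolouringGraph A k).edist φ g + 1 := by
  refine (dicolouringGraph A k).edist_triangle.trans (add_le_add le_rfl ?_)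
  rw [edist_le_one_iff_adj_or_eq]
  by_cases hc : g a = c
  · exact Or.inr (by rw [← hc, update_eq_self])
  · refine Or.inl (show DicolStep A _ _ from ⟨hg, hg', a, by simpa using hc, fun v hv => ?_⟩)
    by_contra hva
    exact hv (update_of_ne hva c g).symm

lemma exists_least_recolouring {g : V → Fin k} (hg : IsDicolouring A g) (a : V) :
    ∃ c ≤ g a, IsDicolouring A (update g a c) ∧
      ∀ c' < c, ¬ AcyclicOn A (insert a {v | g v = c'}) := by
  let S := {c | IsDicolouring A (update g a c)}
  have hS : g a ∈ S := by simpa [S, update_eq_self] using hg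
  refine ⟨wellFounded_lt.min S ⟨_, hS⟩, not_lt.mp (wellFounded_lt.not_lt_min S hS),
    wellFounded_lt.min_mem S _, fun c' hc' h => ?_⟩
  exact wellFounded_lt.not_lt_min S ((isDicolouring_update_iff hg).mpr h) hc'

lemma isDicolouring_piecewise_and_edist_le {g : V → Fin k} (hg : IsDicolouring A g)
    {c : Fin k} (hc : ∀ v, g v ≠ c) {Y : Finset V} (hY : AcyclicOn A Y) :
    IsDicolouring A (Y.piecewise (fun _ => c) g) ∧
      (dicolouringGraph A k).edist g (Y.piecewise (fun _ => c) g) ≤ Y.card := by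
  induction Y using Finset.induction_on with
  | empty => simp [hg]
  | insert a s ha ih =>
    obtain ⟨hs, hds⟩ := ih (hY.mono (by simp [Set.subset_insert]))
    have hsub : insert a {v | s.piecewise (fun _ => c) g v = c} ⊆ (insert a s : Finset V) := by
      rintro v (rfl | hv)
      · simp
      · by_cases hvs : v ∈ s
        · simp [hvs]
        · exact absurd (by simpa [hvs] using hv) (hc v)
    rw [Finset.piecewise_insert]
    have h' := (isDicolouring_update_iff hs).mpr (hY.mono hsub)
    refine ⟨h', (edist_update_le hs h').trans ?_⟩
    rw [Finset.card_insert_of_notMem ha, Nat.cast_succ]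
    gcongr

end DicolouringGraph

section Redicolouring

variable [DecidableEq V] {A : V → V → Prop} {k : ℕ}

lemma exists_isGreedyOn_edist_le {φ : V → Fin k} (hφ : IsDicolouring A φ) {key : V → ℕ}
    (hkey : Injective key) (hφkey : ∀ x y, φ x < φ y → key x < key y) (s : Finset V)
    (hs : ∀ x ∉ s, ∀ y ∈ s, key y < key x) :
    ∃ g, (dicolouringGraph A k).edist φ g ≤ s.card ∧ IsDicolouring A g ∧
      (∀ v ∉ s, g v = φ v) ∧ IsGreedyOn A s (fun v => g v) key := by
  induction s using Finset.induction_on_max_value key with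
  | empty => exact ⟨φ, by simp, hφ, fun _ _ => rfl, hφ.acyclicOn ∅, by simp⟩
  | insert a s ha hmax ih =>
    have hkey_lt : ∀ x ∈ s, key x < key a := fun x hx =>
      (hmax x hx).lt_of_ne fun h => ha (hkey h ▸ hx)
    obtain ⟨g, hφg, hg, hgφ, hgreedy⟩ := ih fun x hx y hy => by
      by_cases hxa : x = a
      · exact hxa ▸ hkey_lt y hy
      · exact hs x (by simp [hxa, hx]) y (Finset.mem_insert_of_mem hy)
    obtain ⟨c, hca, hc, hmin⟩ := exists_least_recolouring hg a
    have hupd : ∀ x ∈ s, update g a c x = g x := fun x hx =>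
      update_of_ne (ne_of_mem_of_not_mem hx ha) c g
    refine ⟨update g a c, ?_, hc, fun v hv => ?_, hc.acyclicOn _, fun v hv j hj => ?_⟩
    · refine (edist_update_le hg hc).trans ?_
      rw [Finset.card_insert_of_notMem ha, Nat.cast_succ]
      gcongr
    · obtain ⟨hva, hvs⟩ : v ≠ a ∧ v ∉ s := by simpa using hv
      rw [update_of_ne hva, hgφ v hvs]
    rcases Finset.mem_insert.mp hv with rfl | hvs
    · -- By minimality of `c`, some dicycle has all its vertices other than `v` coloured `j`.
      -- They were processed before `v`: an unprocessed `x` keeps `φ x = j < φ v`.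
      simp only [update_self] at hj
      have hjk : j < k := hj.trans c.isLt
      obtain ⟨l, hl, hlj⟩ := not_acyclicOn_iff.mp (hmin ⟨j, hjk⟩ (Fin.lt_def.mpr hj))
      refine ⟨l, hl, fun x hxl => or_iff_not_imp_left.mpr fun hxv => ?_⟩
      have hgx : g x = ⟨j, hjk⟩ := (hlj x hxl).resolve_left hxv
      have hxs : x ∈ s := by
        by_contra hxs
        refine (hs x (by simp [hxv, hxs]) v (Finset.mem_insert_self v s)).not_gt (hφkey x v ?_)
        rw [← hgφ x hxs, ← hgφ v ha, hgx]
        exact (Fin.lt_def.mpr hj).trans_le hca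
      exact ⟨Finset.mem_insert_of_mem hxs, hkey_lt x hxs, by rw [hupd x hxs, hgx]⟩
    · obtain ⟨l, hl, hx⟩ := hgreedy.exists_dicycle v hvs j (by rwa [hupd v hvs] at hj)
      refine ⟨l, hl, fun x hxl => (hx x hxl).imp id fun ⟨hxs, hox, hgx⟩ => ?_⟩
      exact ⟨Finset.mem_insert_of_mem hxs, hox, by rw [hupd x hxs]; exact hgx⟩

lemma exists_edist_le_park_acyclicOn [Fintype V] {φ : V → Fin k} (hφ : IsDicolouring A φ)
    {c : Fin k} {W Y : Finset V} (hW : ∀ v, v ∈ W ↔ φ v ≤ c) (hG : DigrundyLE A W c)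
    (hYW : Y ⊆ W) (hY : AcyclicOn A Y) :
    ∃ ψ, (dicolouringGraph A k).edist φ ψ ≤ W.card + Y.card ∧ IsDicolouring A ψ ∧
      (∀ v, v ∈ W \ Y ↔ ψ v < c) ∧ (∀ v ∈ Y, ψ v = c) ∧ ∀ v ∉ W, ψ v = φ v := by
  obtain ⟨key, hkey, hφkey⟩ := exists_injective_refinement fun v => (φ v : ℕ)
  have hWkey : ∀ x ∉ W, ∀ y ∈ W, key y < key x := fun x hx y hy =>
    hφkey y x (((hW y).mp hy).trans_lt (not_le.mp ((hW x).not.mp hx)))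
  obtain ⟨g, hφg, hg, hgφ, hgreedy⟩ := exists_isGreedyOn_edist_le hφ hkey hφkey W hWkey
  have hgW : ∀ v ∈ W, g v < c := fun v hv => hG _ _ hgreedy v hv
  have hgc : ∀ v, g v ≠ c := fun v hc => by
    by_cases hv : v ∈ W
    · exact (hgW v hv).ne hc
    · exact hv ((hW v).mpr (hgφ v hv ▸ hc).le)
  obtain ⟨hψ, hgψ⟩ := isDicolouring_piecewise_and_edist_le hg hgc hY
  refine ⟨Y.piecewise (fun _ => c) g, ((dicolouringGraph A k).edist_triangle).trans
    (add_le_add hφg hgψ), hψ, fun v => ?_, fun v hv => Y.piecewise_eq_of_mem _ _ hv,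
    fun v hv => ?_⟩
  · by_cases hvY : v ∈ Y
    · simp [hvY]
    · rw [Y.piecewise_eq_of_notMem _ _ hvY, Finset.mem_sdiff]
      by_cases hv : v ∈ W
      · simp [hv, hvY, hgW v hv]
      · simpa [hv, hgφ v hv] using (not_le.mp ((hW v).not.mp hv)).le
  · rw [Y.piecewise_eq_of_notMem _ _ (fun h => hv (hYW h)), hgφ v hv]

theorem edist_le_of_eqOn_compl [Fintype V] (c : ℕ) {W : Finset V} {p : ℕ}
    {φ₁ φ₂ : V → Fin k} (hpk : p ≤ k) (hφ₁ : IsDicolouring A φ₁) (hφ₂ : IsDicolouring A φ₂)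
    (hW₁ : ∀ v, v ∈ W ↔ (φ₁ v : ℕ) < p) (hW₂ : ∀ v, v ∈ W ↔ (φ₂ v : ℕ) < p)
    (hagree : Set.EqOn φ₁ φ₂ (↑W)ᶜ) (hG : DigrundyLE A W (p - 1))
    (hD : DicolourableOn A W c) :
    (dicolouringGraph A k).edist φ₁ φ₂ ≤ 4 * c * W.card := by
  induction c generalizing W p φ₁ φ₂ with
  | zero =>
    cases hD.eq_empty
    simp [funext fun v => hagree (Finset.notMem_empty v)]
  | succ c ih =>
    rcases W.eq_empty_or_nonempty with rfl | ⟨v₀, hv₀⟩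
    · simp [funext fun v => hagree (Finset.notMem_empty v)]
    have hp : 1 ≤ p := by have := (hW₁ v₀).mp hv₀; omega
    let col : Fin k := ⟨p - 1, by omega⟩
    have hcol : ∀ {φ : V → Fin k}, (∀ v, v ∈ W ↔ (φ v : ℕ) < p) → ∀ v, v ∈ W ↔ φ v ≤ col :=
      fun {φ} hW v => by
        rw [hW v]
        show _ ↔ (φ v : ℕ) ≤ p - 1
        omega
    obtain ⟨X, hXW, hX, hD'⟩ := hD.exists_acyclicOn_sdiff
    obtain ⟨Y, hXY, hYW, hY, hmax⟩ := exists_maximal_acyclicOn hXW hX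
    obtain ⟨ψ₁, hd₁, hψ₁, hψ₁W, hψ₁Y, hψ₁φ⟩ :=
      exists_edist_le_park_acyclicOn hφ₁ (hcol hW₁) hG hYW hY
    obtain ⟨ψ₂, hd₂, hψ₂, hψ₂W, hψ₂Y, hψ₂φ⟩ :=
      exists_edist_le_park_acyclicOn hφ₂ (hcol hW₂) hG hYW hY
    have hagree' : Set.EqOn ψ₁ ψ₂ (↑(W \ Y))ᶜ := fun v hv => by
      by_cases hvY : v ∈ Y
      · rw [hψ₁Y v hvY, hψ₂Y v hvY]
      · have hvW : v ∉ W := by simpa [hvY] using hv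
        rw [hψ₁φ v hvW, hψ₂φ v hvW, hagree hvW]
    have hrec := ih (p := p - 1) (by omega) hψ₁ hψ₂ (fun v => (hψ₁W v).trans Fin.lt_def)
      (fun v => (hψ₂W v).trans Fin.lt_def) hagree' (hG.sdiff hYW hY hmax) (hD' Y hXY)
    have hYcard := Finset.card_le_card hYW
    have hWYcard := Finset.card_le_card (Finset.sdiff_subset (s := W) (t := Y))
    set G := dicolouringGraph A k
    calc G.edist φ₁ φ₂ ≤ G.edist φ₁ ψ₁ + G.edist ψ₁ ψ₂ + G.edist ψ₂ φ₂ :=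
          G.edist_triangle.trans (add_le_add_left G.edist_triangle _)
      _ ≤ (W.card + Y.card) + 4 * c * (W \ Y).card + (W.card + Y.card) := by
          rw [G.edist_comm (u := ψ₂)]
          gcongr
      _ ≤ 4 * (c + 1) * W.card := by
          norm_cast
          nlinarith

end Redicolouring

theorem stmt9_general [Fintype V] (A : V → V → Prop) (k : ℕ)
    (hk : digrundy A + 1 ≤ k) (α β : V → Fin k)
    (hα : IsDicolouring A α) (hβ : IsDicolouring A β) :
    ∃ l : List (V → Fin k), RedicolPath A α β l ∧
      l.length ≤ 4 * dichromaticNumber A * Fintype.card V := by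
  classical
  obtain ⟨γ, hγ⟩ : dichromaticNumber A ∈ {c | ∃ γ : V → Fin c, IsDicolouring A γ} :=
    Nat.sInf_mem ⟨k, α, hα⟩
  refine exists_redicolPath_of_edist_le ?_
  simpa using edist_le_of_eqOn_compl (dichromaticNumber A) (W := Finset.univ) le_rfl hα hβ
    (by simp) (by simp) (by simp) (digrundyLE_univ.mono (by omega)) (hγ.dicolourableOn _)

theorem stmt9 [Fintype V] [DecidableEq V] (A : V → V → Prop) (k : ℕ)
    (hk : digrundy A + 1 ≤ k) (α β : V → Fin k)
    (hα : IsDicolouring A α) (hβ : IsDicolouring A β) :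
    ∃ l : List (V → Fin k), RedicolPath A α β l ∧
      l.length ≤ 4 * dichromaticNumber A * Fintype.card V :=
  stmt9_general A k hk α β hα hβ
end

section
/- Let D be a digraph and let α be a k-dicolouring of D. Let G_α be the undirected graph on V(D) whose edges are the pairs {u,v} such that uv is an arc of D and α(u) ≠ α(v). Then every proper k-colouring of G_α is a k-dicolouring of D. -/
variable {V : Type*}

/-! On a `β`-monochromatic directed cycle every arc joins vertices of equal `β`-colour, so by the
hypothesis on `β` it joins vertices of equal `α`-colour. Hence `α` is constant along the cycle,
which would then be `α`-monochromatic. -/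

theorem IsDicycle.imp_of_mem_imp {A B : V → V → Prop} {l : List V} (hl : IsDicycle A l)
    (H : ∀ x ∈ l, ∀ y ∈ l, A x y → B x y) : IsDicycle B l := by
  obtain ⟨hne, hnd, hchain, hclose⟩ := hl
  refine ⟨hne, hnd, hchain.imp_of_mem_imp fun x y hx hy => H x hx y hy, ?_⟩
  intro x hx y hy
  exact H x (List.mem_of_mem_getLast? hx) y (List.mem_of_mem_head? hy) (hclose x hx y hy)

theorem IsDicycle.eq_head_of_rel_imp_eq {C : Type*} {A : V → V → Prop} {f : V → C}
    {l : List V} (hl : IsDicycle A l) (hf : ∀ x y, A x y → f x = f y) :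
    ∀ x ∈ l, f x = f (l.head hl.1) :=
  hl.2.2.1.induction (fun x => f x = f (l.head hl.1)) l
    (fun x y hxy hx => (hf x y hxy).symm.trans hx) (fun _ => rfl)

theorem IsDicolouring.of_eq_imp_eq {C C' : Type*} {A : V → V → Prop} {α : V → C} {β : V → C'}
    (hα : IsDicolouring A α) (h : ∀ x y, A x y → β x = β y → α x = α y) :
    IsDicolouring A β := by
  rintro c ⟨l, hl⟩
  have hconst := hl.eq_head_of_rel_imp_eq (f := α) fun x y ⟨hxy, hx, hy⟩ =>
    h x y hxy (hx.trans hy.symm)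
  exact hα (α (l.head hl.1))
    ⟨l, hl.imp_of_mem_imp fun x hx y hy hxy => ⟨hxy.1, hconst x hx, hconst y hy⟩⟩

theorem stmt11_general (A : V → V → Prop) (k : ℕ)
    (α : V → Fin k) (hα : IsDicolouring A α) (β : V → Fin k)
    (hβ : ∀ x y, A x y → α x ≠ α y → β x ≠ β y) :
    IsDicolouring A β :=
  hα.of_eq_imp_eq fun x y hxy => not_imp_not.mp (hβ x y hxy)

theorem stmt11 [Fintype V] [DecidableEq V] (A : V → V → Prop) (k : ℕ)
    (α : V → Fin k) (hα : IsDicolouring A α) (β : V → Fin k)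
    (hβ : ∀ x y, A x y → α x ≠ α y → β x ≠ β y) :
    IsDicolouring A β :=
  stmt11_general A k α hα β hβ
end
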